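/- arXiv:2404.10396 — 2 statements merged into one kernel-verified Lean document; each statement's English description precedes it below -/
import Mathlib

section
/- For any knot sequence, any degree m ≥ 1, any index i with −m ≤ i ≤ n−1, and every u ∈ ℝ that is not equal to any of the knots t_{−m}, …, t_{n+m}, the B-spline basis functions satisfy m·N_{m,i}(u) + (t_i − u)·N′_{m,i}(u) = m·(t_{m+i+1} − t_i)·N_{m−1,i+1}(u)/(t_{m+i+1} − t_{i+1}), where N′_{m,i} denotes the derivative of N_{m,i}, and where the right-hand side is taken to be 0 if t_{m+i+1} = t_{i+1}. -/
/-- The B-spline basis functions `N_{p,i}` of degree `p` over the knot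
sequence `t`, defined by the de Boor–Cox recursion, with the conventions that
a fraction with vanishing denominator is replaced by `0` (automatic for real
division in Lean) and that `N_{p,q} ≡ 0` whenever `q < -p` or `q ≥ n`. -/
noncomputable def bspline (t : ℤ → ℝ) (n : ℕ) : ℕ → ℤ → ℝ → ℝ
  | 0 => fun i u =>
      if 0 ≤ i ∧ i < (n : ℤ) ∧ t i ≤ u ∧ u < t (i + 1) then 1 else 0
  | p + 1 => fun i u =>
      if -((p : ℤ) + 1) ≤ i ∧ i < (n : ℤ) then
        (u - t i) / (t ((p : ℤ) + 1 + i) - t i) * bspline t n p i u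
          + (t ((p : ℤ) + 1 + i + 1) - u) / (t ((p : ℤ) + 1 + i + 1) - t (i + 1))
              * bspline t n p (i + 1) u
      else 0

/-- The `k`-th Bernstein basis polynomial of degree `p`. -/
noncomputable def bern (p k : ℕ) (x : ℝ) : ℝ :=
  (p.choose k : ℝ) * x ^ k * (1 - x) ^ (p - k)

/-!
Differentiating the de Boor–Cox recursion gives, by induction on the degree,
`N'_{p+1,j} = (p+1)/(t_{p+1+j} - t_j) N_{p,j} - (p+1)/(t_{p+2+j} - t_{j+1}) N_{p,j+1}`.
In the inductive step the discrepancy is `N_{p,j+1}/(t_{p+2+j} - t_{j+1})` times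
`(t_{p+2+j} - t_j)/(t_{p+2+j} - t_j) - (t_{p+3+j} - t_{j+1})/(t_{p+3+j} - t_{j+1})`, which vanishes
even when a quotient is `0`: by monotonicity of the knots, `t_{p+2+j} = t_{j+1}` then.
Substituting the derivative and the recursion for `N_{m,i}` into the left-hand side, the
`N_{m-1,i}` terms cancel and the `N_{m-1,i+1}` terms combine into the right-hand side; in degree
`0` both sides vanish, `N_{0,i}` being locally constant off the knots.
-/

open Set Filter Topology

theorem eventually_mem_Ico_iff {α : Type*} [LinearOrder α] [TopologicalSpace α]
    [OrderTopology α] {a b u : α} (ha : u ≠ a) (hb : u ≠ b) :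
    ∀ᶠ x in 𝓝 u, (x ∈ Ico a b ↔ u ∈ Ico a b) := by
  by_cases hu : u ∈ Ioo a b
  · filter_upwards [Ioo_mem_nhds hu.1 hu.2] with x hx
    exact iff_of_true (Ioo_subset_Ico_self hx) (Ioo_subset_Ico_self hu)
  · have hu' : u ∉ Icc a b := fun h => hu ⟨h.1.lt_of_ne ha.symm, h.2.lt_of_ne hb⟩
    filter_upwards [isClosed_Icc.isOpen_compl.mem_nhds hu'] with x hx
    exact iff_of_false (fun h => hx (Ico_subset_Icc_self h))
      (fun h => hu' (Ico_subset_Icc_self h))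

theorem inv_mul_div_self_of_le {K : Type*} [Field K] [LinearOrder K] {x y : K}
    (hx : 0 ≤ x) (hxy : x ≤ y) : x⁻¹ * (y / y) = x⁻¹ := by
  rcases hx.eq_or_lt with rfl | hx
  · simp
  · rw [div_self (hx.trans_le hxy).ne', mul_one]

variable {t : ℤ → ℝ} {n : ℕ}

theorem bspline_eq_zero_of_lt_or_le {p : ℕ} {j : ℤ} (h : j < -(p : ℤ) ∨ (n : ℤ) ≤ j) (u : ℝ) :
    bspline t n p j u = 0 := by
  cases p with
  | zero => simp only [bspline]; rw [if_neg]; omega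
  | succ q => simp only [bspline]; rw [if_neg]; omega

theorem bspline_succ (p : ℕ) (j : ℤ) (u : ℝ) :
    bspline t n (p + 1) j u
      = (u - t j) / (t ((p : ℤ) + 1 + j) - t j) * bspline t n p j u
          + (t ((p : ℤ) + 1 + j + 1) - u) / (t ((p : ℤ) + 1 + j + 1) - t (j + 1))
              * bspline t n p (j + 1) u := by
  by_cases hj : -((p : ℤ) + 1) ≤ j ∧ j < (n : ℤ)
  · simp only [bspline, if_pos hj]
  · simp only [bspline, if_neg hj]
    rw [bspline_eq_zero_of_lt_or_le (by omega), bspline_eq_zero_of_lt_or_le (by omega)]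
    ring

theorem bspline_zero_hasDerivAt {j : ℤ} {u : ℝ} (hj : u ≠ t j) (hj' : u ≠ t (j + 1)) :
    HasDerivAt (bspline t n 0 j) 0 u := by
  apply (hasDerivAt_const u (bspline t n 0 j u)).congr_of_eventuallyEq
  filter_upwards [eventually_mem_Ico_iff hj hj'] with x hx
  exact if_congr (and_congr Iff.rfl (and_congr Iff.rfl hx)) rfl rfl

theorem bspline_succ_hasDerivAt_of {p : ℕ} {j : ℤ} {u d d' : ℝ}
    (hd : HasDerivAt (bspline t n p j) d u) (hd' : HasDerivAt (bspline t n p (j + 1)) d' u) :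
    HasDerivAt (bspline t n (p + 1) j)
      (1 / (t ((p : ℤ) + 1 + j) - t j) * bspline t n p j u
        + (u - t j) / (t ((p : ℤ) + 1 + j) - t j) * d
        - 1 / (t ((p : ℤ) + 1 + j + 1) - t (j + 1)) * bspline t n p (j + 1) u
        + (t ((p : ℤ) + 1 + j + 1) - u) / (t ((p : ℤ) + 1 + j + 1) - t (j + 1)) * d') u := by
  rw [show bspline t n (p + 1) j = _ from funext (bspline_succ p j)]
  have hl := ((hasDerivAt_id' u).sub_const (t j)).div_const (t ((p : ℤ) + 1 + j) - t j)
  have hr := ((hasDerivAt_id' u).const_sub (t ((p : ℤ) + 1 + j + 1))).div_const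
    (t ((p : ℤ) + 1 + j + 1) - t (j + 1))
  exact ((hl.mul hd).add (hr.mul hd')).congr_deriv (by ring)

theorem bspline_succ_hasDerivAt (p : ℕ) {j : ℤ} {u : ℝ}
    (hmono : MonotoneOn t (Icc j (j + p + 2))) (hu : ∀ k ∈ Icc j (j + p + 2), u ≠ t k) :
    HasDerivAt (bspline t n (p + 1) j)
      (((p : ℝ) + 1) / (t ((p : ℤ) + 1 + j) - t j) * bspline t n p j u
        - ((p : ℝ) + 1) / (t ((p : ℤ) + 1 + j + 1) - t (j + 1))
            * bspline t n p (j + 1) u) u := by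
  induction p generalizing j with
  | zero =>
    have h₀ := bspline_zero_hasDerivAt (n := n) (hu j ⟨le_rfl, by omega⟩)
      (hu (j + 1) ⟨by omega, by omega⟩)
    have h₁ := bspline_zero_hasDerivAt (n := n) (hu (j + 1) ⟨by omega, by omega⟩)
      (hu (j + 1 + 1) ⟨by omega, by omega⟩)
    exact (bspline_succ_hasDerivAt_of h₀ h₁).congr_deriv (by push_cast; ring)
  | succ p ih =>
    have hsub₀ : Icc j (j + p + 2) ⊆ Icc j (j + (p + 1 : ℕ) + 2) :=
      Icc_subset_Icc le_rfl (by push_cast; omega)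
    have hsub₁ : Icc (j + 1) (j + 1 + p + 2) ⊆ Icc j (j + (p + 1 : ℕ) + 2) :=
      Icc_subset_Icc (by omega) (by push_cast; omega)
    have hd₀ := ih (hmono.mono hsub₀) (fun k hk => hu k (hsub₀ hk))
    have hd₁ := ih (hmono.mono hsub₁) (fun k hk => hu k (hsub₁ hk))
    refine (bspline_succ_hasDerivAt_of hd₀ hd₁).congr_deriv ?_
    rw [bspline_succ p j u, bspline_succ p (j + 1) u]
    push_cast
    rw [show (p : ℤ) + 1 + 1 + j = p + 1 + j + 1 by ring,
      show (p : ℤ) + 1 + (j + 1) = p + 1 + j + 1 by ring]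
    have ht {k l : ℤ} (hjk : j ≤ k) (hkl : k ≤ l) (hl : l ≤ j + p + 3) : t k ≤ t l :=
      hmono ⟨hjk, by omega⟩ ⟨by omega, by push_cast; omega⟩ hkl
    have h₀₁ : t j ≤ t (j + 1) := ht le_rfl (by omega) (by omega)
    have h₁₂ : t (j + 1) ≤ t (p + 1 + j + 1) := ht (by omega) (by omega) (by omega)
    have h₂₃ : t (p + 1 + j + 1) ≤ t (p + 1 + j + 1 + 1) := ht (by omega) (by omega) (by omega)
    have hc₀ := inv_mul_div_self_of_le (sub_nonneg.2 h₁₂) (sub_le_sub_left h₀₁ _)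
    have hc₁ := inv_mul_div_self_of_le (sub_nonneg.2 h₁₂) (sub_le_sub_right h₂₃ (t (j + 1)))
    linear_combination ((p : ℝ) + 1) * bspline t n p (j + 1) u * (hc₁ - hc₀)

theorem bspline_diff_rec_right_general
    (m n : ℕ) (t : ℤ → ℝ)
    (hmono : ∀ k l : ℤ, -(m : ℤ) ≤ k → k ≤ l → l ≤ (n : ℤ) + m → t k ≤ t l)
    (i : ℤ) (hi1 : -(m : ℤ) ≤ i) (hi2 : i ≤ (n : ℤ) - 1)
    (u : ℝ) (hu : ∀ k : ℤ, -(m : ℤ) ≤ k → k ≤ (n : ℤ) + m → u ≠ t k) :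
    (m : ℝ) * bspline t n m i u + (t i - u) * deriv (bspline t n m i) u
      = (m : ℝ) * (t ((m : ℤ) + i + 1) - t i)
          * (bspline t n (m - 1) (i + 1) u / (t ((m : ℤ) + i + 1) - t (i + 1))) := by
  cases m with
  | zero =>
    rw [(bspline_zero_hasDerivAt (hu i hi1 (by omega)) (hu (i + 1) (by omega) (by omega))).deriv]
    simp
  | succ q =>
    have hspan : Icc i (i + q + 2) ⊆ Icc (-((q + 1 : ℕ) : ℤ)) (n + (q + 1 : ℕ)) :=
      Icc_subset_Icc hi1 (by omega)
    have hderiv := bspline_succ_hasDerivAt q (n := n)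
      (fun k hk l hl hkl => hmono k l (hspan hk).1 hkl (hspan hl).2)
      (fun k hk => hu k (hspan hk).1 (hspan hk).2)
    rw [hderiv.deriv, bspline_succ q i u, Nat.add_sub_cancel]
    push_cast
    ring

/-- `m·N_{m,i}(u) + (t_i − u)·N′_{m,i}(u)
      = m·(t_{m+i+1} − t_i)·N_{m−1,i+1}(u)/(t_{m+i+1} − t_{i+1})`
for every `u` which is not a knot (the right-hand side being `0` when
`t_{m+i+1} = t_{i+1}`, which is automatic for real division). -/
theorem bspline_diff_rec_right
    (m n : ℕ) (hm : 1 ≤ m) (hn : 1 ≤ n) (t : ℤ → ℝ)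
    (hmono : ∀ k l : ℤ, -(m : ℤ) ≤ k → k ≤ l → l ≤ (n : ℤ) + m → t k ≤ t l)
    (h0n : t 0 < t n)
    (i : ℤ) (hi1 : -(m : ℤ) ≤ i) (hi2 : i ≤ (n : ℤ) - 1)
    (u : ℝ) (hu : ∀ k : ℤ, -(m : ℤ) ≤ k → k ≤ (n : ℤ) + m → u ≠ t k) :
    (m : ℝ) * bspline t n m i u + (t i - u) * deriv (bspline t n m i) u
      = (m : ℝ) * (t ((m : ℤ) + i + 1) - t i)
          * (bspline t n (m - 1) (i + 1) u / (t ((m : ℤ) + i + 1) - t (i + 1))) :=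
  bspline_diff_rec_right_general m n t hmono i hi1 hi2 u hu
end

section
/- Suppose m ≥ 1, no inner knot has multiplicity greater than m, and fix j with 0 ≤ j ≤ n−1 such that t_j < t_{j+1}. Then for every i with j − m ≤ i ≤ j and every k with 0 ≤ k ≤ m, the adjusted Bernstein–Bézier coefficients over the knot span [t_j, t_{j+1}) satisfy b_{m,k}^{(i,j)} = ((m−k)/m)·( (t_j − t_i)/(t_{m+i} − t_i)·b_{m−1,k}^{(i,j)} + (t_{m+i+1} − t_j)/(t_{m+i+1} − t_{i+1})·b_{m−1,k}^{(i+1,j)} ) + (k/m)·( (t_{j+1} − t_i)/(t_{m+i} − t_i)·b_{m−1,k−1}^{(i,j)} + (t_{m+i+1} − t_{j+1})/(t_{m+i+1} − t_{i+1})·b_{m−1,k−1}^{(i+1,j)} ), where a fraction whose denominator vanishes is replaced by 0, and where a coefficient b_{p,ℓ}^{(q,j)} is taken to be 0 whenever ℓ < 0, ℓ > p, q < j − p, or q > j. -/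
/-!
On the span write `x = (u - t_j) / (t_{j+1} - t_j)`. The two de Boor–Cox weights of `N_{m,i}` are
affine in `u`, so each equals `(1 - x) w(t_j) + x w(t_{j+1})`. Multiplying a Bernstein form of
degree `m - 1` by `1 - x` or by `x` gives a Bernstein form of degree `m` with the factors
`(m - k) / m` and `k / m`; hence the recursion writes `N_{m,i}` on the span as a degree-`m`
Bernstein form with exactly the claimed coefficients. The coefficients extended by zero are the
right ones because a B-spline of degree `m - 1` outside the window `j - m + 1 ≤ q ≤ j` vanishes
on the span. Finally Bernstein coefficients are unique: the substitution `x = y / (1 + y)` turns a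
Bernstein form vanishing on `[0, 1)` into a polynomial vanishing on `[0, ∞)`.
-/

open Finset

section BSpline

variable (t : ℤ → ℝ) (n : ℕ)

lemma bspline_succ_of_le_of_lt {p : ℕ} {i : ℤ} (hi : -((p : ℤ) + 1) ≤ i) (hin : i < n)
    (u : ℝ) :
    bspline t n (p + 1) i u
      = (u - t i) / (t ((p : ℤ) + 1 + i) - t i) * bspline t n p i u
        + (t ((p : ℤ) + 1 + i + 1) - u) / (t ((p : ℤ) + 1 + i + 1) - t (i + 1))
            * bspline t n p (i + 1) u := by
  rw [bspline]
  exact if_pos ⟨hi, hin⟩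

lemma bspline_eq_zero_of_lt_knots (p : ℕ) (i : ℤ) (u : ℝ)
    (h : ∀ q : ℤ, i ≤ q → q ≤ i + p → u < t q) : bspline t n p i u = 0 := by
  induction p generalizing i with
  | zero =>
    simp only [bspline]
    rw [if_neg]
    rintro ⟨-, -, hle, -⟩
    exact (h i le_rfl (by simp)).not_ge hle
  | succ p ih =>
    simp only [bspline]
    rw [ih i fun q h₁ h₂ => h q h₁ (by omega),
      ih (i + 1) fun q h₁ h₂ => h q (by omega) (by omega)]
    simp

lemma bspline_eq_zero_of_knots_le (p : ℕ) (i : ℤ) (u : ℝ)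
    (h : ∀ q : ℤ, i + 1 ≤ q → q ≤ i + p + 1 → t q ≤ u) : bspline t n p i u = 0 := by
  induction p generalizing i with
  | zero =>
    simp only [bspline]
    rw [if_neg]
    rintro ⟨-, -, -, hlt⟩
    exact (h (i + 1) le_rfl (by simp)).not_gt hlt
  | succ p ih =>
    simp only [bspline]
    rw [ih i fun q h₁ h₂ => h q h₁ (by omega),
      ih (i + 1) fun q h₁ h₂ => h q (by omega) (by omega)]
    simp

lemma bspline_eq_sum_extended_coeff {j : ℤ} {p : ℕ}
    (hmono : MonotoneOn t (Set.Icc (j - p) (j + p + 1)))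
    (b : ℤ → ℕ → ℝ) (hb : ∀ q : ℤ, ∀ u ∈ Set.Ico (t j) (t (j + 1)),
      bspline t n p q u = ∑ k ∈ range (p + 1), b q k * bern p k ((u - t j) / (t (j + 1) - t j)))
    (bb : ℤ → ℤ → ℝ) (hbb : ∀ q ℓ : ℤ,
      bb q ℓ = if ℓ < 0 ∨ (p : ℤ) < ℓ ∨ q < j - (p : ℤ) ∨ j < q then 0
        else b q ℓ.toNat)
    (q : ℤ) (hq₁ : j - p - 1 ≤ q) (hq₂ : q ≤ j + 1) {u : ℝ}
    (hu : u ∈ Set.Ico (t j) (t (j + 1))) :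
    bspline t n p q u
      = ∑ k ∈ range (p + 1), bb q k * bern p k ((u - t j) / (t (j + 1) - t j)) := by
  have hmem : ∀ r, j - p ≤ r → r ≤ j + p + 1 → r ∈ Set.Icc (j - p) (j + p + 1) :=
    fun r h₁ h₂ => ⟨h₁, h₂⟩
  by_cases hwin : j - p ≤ q ∧ q ≤ j
  · rw [hb q u hu]
    refine sum_congr rfl fun k hk => ?_
    have : k ≤ p := Nat.lt_succ_iff.mp (mem_range.mp hk)
    rw [hbb, if_neg (by omega), Int.toNat_natCast]
  · have hzero : ∀ k ∈ range (p + 1), bb q k * bern p k ((u - t j) / (t (j + 1) - t j)) = 0 :=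
      fun k _ => by rw [hbb, if_pos (by omega), zero_mul]
    rw [sum_eq_zero hzero]
    rcases not_and_or.mp hwin with hleft | hright
    · refine bspline_eq_zero_of_knots_le t n p q u fun r h₁ h₂ => ?_
      exact (hmono (hmem r (by omega) (by omega)) (hmem j (by omega) (by omega))
        (by omega)).trans hu.1
    · refine bspline_eq_zero_of_lt_knots t n p q u fun r h₁ h₂ => ?_
      exact hu.2.trans_le (hmono (hmem (j + 1) (by omega) (by omega))
        (hmem r (by omega) (by omega)) (by omega))

end BSpline

lemma sub_div_eq_interp {x₀ x₁ : ℝ} (h : x₀ ≠ x₁) (a d u : ℝ) :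
    (u - a) / d
      = (x₀ - a) / d * (1 - (u - x₀) / (x₁ - x₀)) + (x₁ - a) / d * ((u - x₀) / (x₁ - x₀)) := by
  rw [div_mul_eq_mul_div, div_mul_eq_mul_div, ← add_div]
  congr 1
  field_simp [sub_ne_zero.mpr h.symm]
  ring

lemma const_sub_div_eq_interp {x₀ x₁ : ℝ} (h : x₀ ≠ x₁) (a d u : ℝ) :
    (a - u) / d
      = (a - x₀) / d * (1 - (u - x₀) / (x₁ - x₀)) + (a - x₁) / d * ((u - x₀) / (x₁ - x₀)) := by
  rw [div_mul_eq_mul_div, div_mul_eq_mul_div, ← add_div]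
  congr 1
  field_simp [sub_ne_zero.mpr h.symm]
  ring

section Bernstein

lemma one_sub_mul_bern {q k : ℕ} (hk : k ≤ q) (x : ℝ) :
    (1 - x) * bern q k x = ((q + 1 - k) / (q + 1)) * bern (q + 1) k x := by
  have hchoose : ((q : ℝ) + 1) * q.choose k = ((q : ℝ) + 1 - k) * (q + 1).choose k := by
    have h := congrArg (Nat.cast : ℕ → ℝ) (Nat.choose_mul_succ_eq q k)
    push_cast [Nat.cast_sub (by omega : k ≤ q + 1)] at h
    linarith
  rw [bern, bern, show q + 1 - k = q - k + 1 by omega, div_mul_eq_mul_div,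
    eq_div_iff (by positivity)]
  linear_combination x ^ k * (1 - x) ^ (q - k + 1) * hchoose

lemma mul_bern (q k : ℕ) (x : ℝ) :
    x * bern q k x = ((k + 1) / (q + 1)) * bern (q + 1) (k + 1) x := by
  have hchoose : ((q : ℝ) + 1) * q.choose k = ((k : ℝ) + 1) * (q + 1).choose (k + 1) := by
    have h := congrArg (Nat.cast : ℕ → ℝ) (Nat.add_one_mul_choose_eq q k)
    push_cast at h
    linarith
  rw [bern, bern, Nat.add_sub_add_right, div_mul_eq_mul_div, eq_div_iff (by positivity)]
  linear_combination x ^ (k + 1) * (1 - x) ^ (q - k) * hchoose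

variable (q : ℕ) (e : ℤ → ℝ) (x : ℝ)

lemma one_sub_mul_sum_bern :
    (1 - x) * ∑ k ∈ range (q + 1), e k * bern q k x
      = ∑ k ∈ range (q + 2), ((q + 1 - k) / (q + 1)) * e k * bern (q + 1) k x := by
  rw [sum_range_succ _ (q + 1), mul_sum]
  simp only [Nat.cast_add, Nat.cast_one, sub_self, zero_div, zero_mul, add_zero]
  refine sum_congr rfl fun k hk => ?_
  rw [mul_left_comm, one_sub_mul_bern (Nat.lt_succ_iff.mp (mem_range.mp hk))]
  ring

lemma mul_sum_bern :
    x * ∑ k ∈ range (q + 1), e k * bern q k x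
      = ∑ k ∈ range (q + 2), (k / (q + 1)) * e (k - 1) * bern (q + 1) k x := by
  rw [sum_range_succ' _ (q + 1), mul_sum]
  simp only [Nat.cast_zero, zero_div, zero_mul, add_zero, Nat.cast_add, Nat.cast_one,
    add_sub_cancel_right]
  refine sum_congr rfl fun k _ => ?_
  rw [mul_left_comm, mul_bern]
  ring

lemma affine_mul_sum_bern (a₀ a₁ : ℝ) :
    (a₀ * (1 - x) + a₁ * x) * ∑ k ∈ range (q + 1), e k * bern q k x
      = ∑ k ∈ range (q + 2),
          ((q + 1 - k) / (q + 1) * a₀ * e k + k / (q + 1) * a₁ * e (k - 1))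
            * bern (q + 1) k x := by
  rw [add_mul, mul_assoc, mul_assoc, one_sub_mul_sum_bern, mul_sum_bern, mul_sum, mul_sum,
    ← sum_add_distrib]
  refine sum_congr rfl fun k _ => ?_
  ring

end Bernstein

open Polynomial in
lemma eq_zero_of_sum_bern_eq_zero {p : ℕ} {c : ℕ → ℝ}
    (h : ∀ x ∈ Set.Ico (0 : ℝ) 1, ∑ k ∈ range (p + 1), c k * bern p k x = 0)
    {k : ℕ} (hk : k ≤ p) : c k = 0 := by
  set Q : ℝ[X] := ∑ k ∈ range (p + 1), C (c k * p.choose k) * X ^ k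
  have hroot : ∀ y : ℝ, 0 ≤ y → Q.eval y = 0 := by
    intro y hy
    have hx : y / (1 + y) ∈ Set.Ico (0 : ℝ) 1 :=
      ⟨by positivity, (div_lt_one (by positivity)).mpr (by linarith)⟩
    have hterm : ∀ k ∈ range (p + 1),
        c k * p.choose k * y ^ k = (1 + y) ^ p * (c k * bern p k (y / (1 + y))) := by
      intro k hk
      have hkp : p = k + (p - k) := by have := mem_range.mp hk; omega
      have hy' : (1 : ℝ) + y ≠ 0 := by positivity
      rw [bern, one_sub_div hy', add_sub_cancel_right, div_pow, one_div_pow, hkp, pow_add,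
        Nat.add_sub_cancel_left]
      field_simp
    simp only [Q, eval_finsetSum, eval_mul, eval_C, eval_pow, eval_X]
    rw [sum_congr rfl hterm, ← mul_sum, h _ hx, mul_zero]
  have hQ : Q = 0 :=
    Q.eq_zero_of_infinite_isRoot <| (Set.Ici_infinite 0).mono hroot
  have hcoeff : Q.coeff k = c k * p.choose k := by
    simp only [Q, finsetSum_coeff, coeff_C_mul_X_pow, sum_ite_eq, mem_range,
      if_pos (Nat.lt_succ_iff.mpr hk)]
  rw [hQ, coeff_zero, eq_comm, mul_eq_zero] at hcoeff
  exact hcoeff.resolve_right (Nat.cast_ne_zero.mpr (Nat.choose_pos hk).ne')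

lemma coeff_eq_of_sum_bern_eq {a b : ℝ} (hab : a < b) {p : ℕ} {c d : ℕ → ℝ}
    (h : ∀ u ∈ Set.Ico a b, ∑ k ∈ range (p + 1), c k * bern p k ((u - a) / (b - a))
      = ∑ k ∈ range (p + 1), d k * bern p k ((u - a) / (b - a))) :
    ∀ k ≤ p, c k = d k := by
  intro k hk
  refine sub_eq_zero.mp
    (eq_zero_of_sum_bern_eq_zero (c := fun k => c k - d k) (fun x hx => ?_) hk)
  have hba : 0 < b - a := sub_pos.mpr hab
  have hu : a + x * (b - a) ∈ Set.Ico a b :=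
    ⟨by nlinarith [hx.1], by nlinarith [hx.2]⟩
  have hparam : (a + x * (b - a) - a) / (b - a) = x := by field_simp; ring
  simp only [sub_mul, sum_sub_distrib]
  rw [← hparam, h _ hu, sub_self]

theorem bspline_bezier_deBoorCox_recurrence_general
    (m n : ℕ) (hm : 1 ≤ m) (t : ℤ → ℝ)
    (hmono : ∀ k l : ℤ, -(m : ℤ) ≤ k → k ≤ l → l ≤ (n : ℤ) + m → t k ≤ t l)
    (j : ℤ) (hj1 : 0 ≤ j) (hj2 : j ≤ (n : ℤ) - 1) (hspan : t j < t (j + 1))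
    (b : ℕ → ℤ → ℕ → ℝ)
    (hb : ∀ p : ℕ, ∀ i : ℤ, ∀ u ∈ Set.Ico (t j) (t (j + 1)),
      bspline t n p i u
        = ∑ k ∈ Finset.range (p + 1),
            b p i k * bern p k ((u - t j) / (t (j + 1) - t j)))
    (bb : ℕ → ℤ → ℤ → ℝ)
    (hbb : ∀ (p : ℕ) (q ℓ : ℤ),
      bb p q ℓ = if ℓ < 0 ∨ (p : ℤ) < ℓ ∨ q < j - (p : ℤ) ∨ j < q then 0
                 else b p q ℓ.toNat)
    (i : ℤ) (hi1 : j - m ≤ i) (hi2 : i ≤ j)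
    (k : ℕ) (hk : k ≤ m) :
    b m i k
      = (((m : ℝ) - k) / m)
          * ((t j - t i) / (t ((m : ℤ) + i) - t i) * bb (m - 1) i k
              + (t ((m : ℤ) + i + 1) - t j) / (t ((m : ℤ) + i + 1) - t (i + 1))
                  * bb (m - 1) (i + 1) k)
        + ((k : ℝ) / m)
            * ((t (j + 1) - t i) / (t ((m : ℤ) + i) - t i) * bb (m - 1) i ((k : ℤ) - 1)
                + (t ((m : ℤ) + i + 1) - t (j + 1)) / (t ((m : ℤ) + i + 1) - t (i + 1))
                    * bb (m - 1) (i + 1) ((k : ℤ) - 1)) := by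
  obtain ⟨p, rfl⟩ : ∃ p, m = p + 1 := ⟨m - 1, by omega⟩
  push_cast at hi1 ⊢
  have hmono_span : MonotoneOn t (Set.Icc (j - p) (j + p + 1)) := fun x hx y hy hxy =>
    hmono x y (by push_cast; linarith [hx.1]) hxy (by push_cast; linarith [hy.2])
  have hN := bspline_eq_sum_extended_coeff t n hmono_span (b p) (hb p) (bb p) (hbb p)
  revert k
  refine coeff_eq_of_sum_bern_eq hspan fun u hu => ?_
  rw [← hb (p + 1) i u hu, bspline_succ_of_le_of_lt t n (by omega) (by omega),
    hN i (by omega) (by omega) hu, hN (i + 1) (by omega) (by omega) hu,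
    sub_div_eq_interp hspan.ne (t i) _ u, const_sub_div_eq_interp hspan.ne (t _) _ u,
    affine_mul_sum_bern, affine_mul_sum_bern, ← sum_add_distrib]
  refine sum_congr rfl fun k _ => ?_
  ring

/-- the degree-raising (de Boor–Cox type) recurrence for the
adjusted Bernstein–Bézier coefficients over a non-empty knot span
`[t_j, t_{j+1})`:
`b_{m,k}^{(i,j)} = ((m−k)/m)·((t_j − t_i)/(t_{m+i} − t_i)·b_{m−1,k}^{(i,j)}
      + (t_{m+i+1} − t_j)/(t_{m+i+1} − t_{i+1})·b_{m−1,k}^{(i+1,j)})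
   + (k/m)·((t_{j+1} − t_i)/(t_{m+i} − t_i)·b_{m−1,k−1}^{(i,j)}
      + (t_{m+i+1} − t_{j+1})/(t_{m+i+1} − t_{i+1})·b_{m−1,k−1}^{(i+1,j)})`,
where a fraction with vanishing denominator is `0` (automatic for real
division), and `bb p q ℓ` extends `b_{p,ℓ}^{(q,j)}` by `0` whenever `ℓ < 0`,
`ℓ > p`, `q < j − p` or `q > j`. -/
theorem bspline_bezier_deBoorCox_recurrence
    (m n : ℕ) (hm : 1 ≤ m) (hn : 1 ≤ n) (t : ℤ → ℝ)
    (hmono : ∀ k l : ℤ, -(m : ℤ) ≤ k → k ≤ l → l ≤ (n : ℤ) + m → t k ≤ t l)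
    (h0n : t 0 < t n)
    (hmult : ∀ r : ℤ, 1 ≤ r → r ≤ (n : ℤ) - 1 →
      ((Finset.Icc (-(m : ℤ)) ((n : ℤ) + m)).filter (fun k => t k = t r)).card ≤ m)
    (j : ℤ) (hj1 : 0 ≤ j) (hj2 : j ≤ (n : ℤ) - 1) (hspan : t j < t (j + 1))
    (b : ℕ → ℤ → ℕ → ℝ)
    (hb : ∀ p : ℕ, ∀ i : ℤ, ∀ u ∈ Set.Ico (t j) (t (j + 1)),
      bspline t n p i u
        = ∑ k ∈ Finset.range (p + 1),
            b p i k * bern p k ((u - t j) / (t (j + 1) - t j)))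
    (bb : ℕ → ℤ → ℤ → ℝ)
    (hbb : ∀ (p : ℕ) (q ℓ : ℤ),
      bb p q ℓ = if ℓ < 0 ∨ (p : ℤ) < ℓ ∨ q < j - (p : ℤ) ∨ j < q then 0
                 else b p q ℓ.toNat)
    (i : ℤ) (hi1 : j - m ≤ i) (hi2 : i ≤ j)
    (k : ℕ) (hk : k ≤ m) :
    b m i k
      = (((m : ℝ) - k) / m)
          * ((t j - t i) / (t ((m : ℤ) + i) - t i) * bb (m - 1) i k
              + (t ((m : ℤ) + i + 1) - t j) / (t ((m : ℤ) + i + 1) - t (i + 1))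
                  * bb (m - 1) (i + 1) k)
        + ((k : ℝ) / m)
            * ((t (j + 1) - t i) / (t ((m : ℤ) + i) - t i) * bb (m - 1) i ((k : ℤ) - 1)
                + (t ((m : ℤ) + i + 1) - t (j + 1)) / (t ((m : ℤ) + i + 1) - t (i + 1))
                    * bb (m - 1) (i + 1) ((k : ℤ) - 1)) :=
  bspline_bezier_deBoorCox_recurrence_general m n hm t hmono j hj1 hj2 hspan b hb bb hbb i hi1 hi2 k
    hk
end
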